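/- arXiv:math/0408300 — 2 statements merged into one kernel-verified Lean document; each statement's English description precedes it below -/
import Mathlib

section
/- Let A be a nonunital associative ring and a ∈ A. The following are equivalent: (1) a is nilpotent and a ∈ L(A); (2) a³ = 0 and a ∈ L(A); (3) a ∈ N'₃(A), i.e. a*x*y = 0 for all x, y ∈ A. -/
/-- `nupow a n` is the `n`-th power `aⁿ` of `a` in a non-unital ring, for `n ≥ 1`
(with junk value `0` at `n = 0`). -/
def nupow {A : Type*} [NonUnitalRing A] (a : A) : ℕ → A
  | 0 => 0
  | 1 => a
  | (n + 2) => nupow a (n + 1) * a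

/-- `a ∈ L(A)`: left multiplication `x ↦ a * x` is a multiplicative map, whence the name. -/
def IsEndomorphicLeft {A : Type*} [Mul A] (a : A) : Prop :=
  ∀ x y : A, a * x * a * y = a * x * y

section SemigroupWithZero

variable {A : Type*} [SemigroupWithZero A] {a : A}

theorem IsEndomorphicLeft.mul_mul_mul_left (ha : IsEndomorphicLeft a) (x y : A) :
    a * x * (a * y) = a * x * y := by
  rw [← mul_assoc]; exact ha x y

theorem IsEndomorphicLeft.of_mul_mul_eq_zero (h : ∀ x y : A, a * x * y = 0) :
    IsEndomorphicLeft a := fun x y => by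
  rw [h x a, h x y, zero_mul]

/-- Three applications of the defining identity insert `a * a * a` in front of `y`. -/
theorem IsEndomorphicLeft.mul_mul_eq_zero (ha : IsEndomorphicLeft a) (h3 : a * a * a = 0)
    (x y : A) : a * x * y = 0 :=
  calc a * x * y = a * x * (a * (a * (a * y))) := by
        rw [ha.mul_mul_mul_left, ha.mul_mul_mul_left, ha.mul_mul_mul_left]
    _ = 0 := by rw [← mul_assoc a, ← mul_assoc (a * a), h3, zero_mul, mul_zero]

end SemigroupWithZero

section NonUnitalRing

variable {A : Type*} [NonUnitalRing A] {a : A}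

theorem IsEndomorphicLeft.nupow_add_three (ha : IsEndomorphicLeft a) (n : ℕ) :
    nupow a (n + 3) = a * a * a := by
  induction n with
  | zero => rfl
  | succ k ih =>
    change nupow a (k + 3) * a = a * a * a
    rw [ih]
    exact ha a a

theorem IsEndomorphicLeft.mul_mul_self_eq_zero_of_nupow_eq_zero (ha : IsEndomorphicLeft a)
    {n : ℕ} (hn : 1 ≤ n) (h0 : nupow a n = 0) : a * a * a = 0 := by
  match n, hn with
  | 1, _ => rw [show a = 0 from h0, mul_zero]
  | 2, _ => rw [show a * a = 0 from h0, zero_mul]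
  | k + 3, _ => rwa [ha.nupow_add_three] at h0

end NonUnitalRing

/-- In a nonunital associative ring `A`, the following are equivalent for `a ∈ A`:
(1) `a` is nilpotent and `a ∈ L(A)`; (2) `a³ = 0` and `a ∈ L(A)`;
(3) `a ∈ N'₃(A)`, i.e. `a*x*y = 0` for all `x, y`. -/
theorem stmt_5 {A : Type*} [NonUnitalRing A] (a : A)
    {L : Set A}
    (hL : L = {a : A | ∀ x y : A, a * x * a * y = a * x * y}) :
    (((∃ n : ℕ, 1 ≤ n ∧ nupow a n = 0) ∧ a ∈ L) ↔ (a * a * a = 0 ∧ a ∈ L)) ∧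
    ((a * a * a = 0 ∧ a ∈ L) ↔ ∀ x y : A, a * x * y = 0) := by
  subst hL
  refine ⟨⟨?_, ?_⟩, ⟨?_, ?_⟩⟩
  · rintro ⟨⟨n, hn, h0⟩, ha⟩
    exact ⟨IsEndomorphicLeft.mul_mul_self_eq_zero_of_nupow_eq_zero ha hn h0, ha⟩
  · rintro ⟨h3, ha⟩
    exact ⟨⟨3, by norm_num, h3⟩, ha⟩
  · rintro ⟨h3, ha⟩
    exact IsEndomorphicLeft.mul_mul_eq_zero ha h3
  · intro h
    exact ⟨h a a, IsEndomorphicLeft.of_mul_mul_eq_zero h⟩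
end

section
/- Let A be a complex Banach algebra (not necessarily unital). Then N'₃(A) is exactly the connected component of 0 in the subspace L(A). -/
/-!
Write `N = N'₃(A)` and `L = L(A)`. The set `N` is a closed linear subspace contained in `L`, so
it is connected and contains `0`. It is also open in `L`: if `a ∈ N`, `b ∈ L` and
`c = b - a` has norm `< 1`, then `b * b * y = c * b * y`, and iterating
`b * x * y = b * x * (b * y)` gives `‖b * x * y‖ ≤ ‖b * x‖ * ‖c‖ ^ m * ‖b * y‖` for all `m`,
so `b ∈ N`. A connected subset that is closed and relatively open in `L` is a component of `L`.
-/

open Metric Set Filter Topology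

theorem connectedComponentIn_eq_of_isPreconnected_of_isClosed {X : Type*} [TopologicalSpace X]
    {S T U : Set X} {x : X} (hS : IsPreconnected S) (hx : x ∈ S) (hST : S ⊆ T)
    (hSc : IsClosed S) (hU : IsOpen U) (hSU : S ⊆ U) (hTU : T ∩ U ⊆ S) :
    connectedComponentIn T x = S := by
  refine subset_antisymm (fun z hz => ?_) (hS.subset_connectedComponentIn hx hST)
  by_contra hzS
  have hcover : connectedComponentIn T x ⊆ U ∪ Sᶜ := fun y _ => by
    by_cases hy : y ∈ S
    · exact Or.inl (hSU hy)
    · exact Or.inr hy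
  obtain ⟨w, hwC, hwU, hwS⟩ := isPreconnected_connectedComponentIn U Sᶜ hU hSc.isOpen_compl
    hcover ⟨x, mem_connectedComponentIn (hST hx), hSU hx⟩ ⟨z, hz, hzS⟩
  exact hwS (hTU ⟨connectedComponentIn_subset T x hwC, hwU⟩)

/-- `L(A)` in the paper. -/
def endomorphicLeft (A : Type*) [Mul A] : Set A :=
  {a | ∀ x y : A, a * x * a * y = a * x * y}

/-- `N'₃(A)` in the paper. -/
def leftAnnihilatorSq (A : Type*) [Mul A] [Zero A] : Set A :=
  {a | ∀ x y : A, a * x * y = 0}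

theorem zero_mem_leftAnnihilatorSq (A : Type*) [MulZeroClass A] : (0 : A) ∈ leftAnnihilatorSq A :=
  fun x y => by rw [zero_mul, zero_mul]

theorem leftAnnihilatorSq_subset_endomorphicLeft (A : Type*) [SemigroupWithZero A] :
    leftAnnihilatorSq A ⊆ endomorphicLeft A := fun a ha x y => by
  rw [ha x y, mul_assoc a x a, ha]

theorem isClosed_leftAnnihilatorSq (A : Type*) [TopologicalSpace A] [MulZeroClass A]
    [ContinuousMul A] [T1Space A] : IsClosed (leftAnnihilatorSq A) := by
  have hN : leftAnnihilatorSq A = ⋂ (x : A) (y : A), (fun a => a * x * y) ⁻¹' {0} := by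
    ext a
    simp [leftAnnihilatorSq]
  rw [hN]
  exact isClosed_iInter fun x => isClosed_iInter fun y =>
    isClosed_singleton.preimage (by fun_prop)

theorem convex_leftAnnihilatorSq (𝕜 A : Type*) [Semiring 𝕜] [PartialOrder 𝕜]
    [NonUnitalNonAssocSemiring A] [Module 𝕜 A] [IsScalarTower 𝕜 A A] :
    Convex 𝕜 (leftAnnihilatorSq A) := fun p hp q hq s t _ _ _ x y => by
  simp only [add_mul, smul_mul_assoc, hp x y, hq x y, smul_zero, add_zero]

section NonUnitalNormedRing

variable {A : Type*} [NonUnitalNormedRing A] {a b : A}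

theorem norm_mul_mul_le_mul_norm_sub_pow (ha : a ∈ leftAnnihilatorSq A)
    (hb : b ∈ endomorphicLeft A) (x : A) (m : ℕ) :
    ∀ y : A, ‖b * x * y‖ ≤ ‖b * x‖ * ‖b - a‖ ^ m * ‖b * y‖ := by
  have hbx : ∀ y, b * x * (b * y) = b * x * y := fun y => by rw [← mul_assoc, hb]
  induction m with
  | zero => intro y; simpa [hbx] using norm_mul_le (b * x) (b * y)
  | succ m ih =>
    intro y
    have hbb : b * (b * y) = (b - a) * (b * y) := by
      rw [sub_mul, ← mul_assoc a, ha, sub_zero]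
    calc ‖b * x * y‖ = ‖b * x * (b * y)‖ := by rw [hbx]
      _ ≤ ‖b * x‖ * ‖b - a‖ ^ m * ‖(b - a) * (b * y)‖ := hbb ▸ ih (b * y)
      _ ≤ ‖b * x‖ * ‖b - a‖ ^ m * (‖b - a‖ * ‖b * y‖) := by gcongr; exact norm_mul_le _ _
      _ = ‖b * x‖ * ‖b - a‖ ^ (m + 1) * ‖b * y‖ := by ring

theorem mem_leftAnnihilatorSq_of_norm_sub_lt_one (ha : a ∈ leftAnnihilatorSq A)
    (hb : b ∈ endomorphicLeft A) (hab : ‖b - a‖ < 1) : b ∈ leftAnnihilatorSq A := by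
  intro x y
  have hlim : Tendsto (fun m : ℕ => ‖b * x‖ * ‖b - a‖ ^ m * ‖b * y‖) atTop (𝓝 0) := by
    simpa using ((tendsto_pow_atTop_nhds_zero_of_lt_one (norm_nonneg _) hab).const_mul
      ‖b * x‖).mul_const ‖b * y‖
  exact norm_le_zero_iff.mp <|
    ge_of_tendsto' hlim fun m => norm_mul_mul_le_mul_norm_sub_pow ha hb x m y

theorem endomorphicLeft_inter_thickening_subset :
    endomorphicLeft A ∩ thickening 1 (leftAnnihilatorSq A) ⊆ leftAnnihilatorSq A := by
  rintro b ⟨hb, hbN⟩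
  obtain ⟨a, ha, hab⟩ := mem_thickening_iff.mp hbN
  exact mem_leftAnnihilatorSq_of_norm_sub_lt_one ha hb (by rwa [← dist_eq_norm])

end NonUnitalNormedRing

theorem stmt_9_general {A : Type*} [NonUnitalNormedRing A] [NormedSpace ℂ A]
    [IsScalarTower ℂ A A] :
    {a : A | ∀ x y : A, a * x * y = 0} =
      connectedComponentIn {a : A | ∀ x y : A, a * x * a * y = a * x * y} 0 :=
  (connectedComponentIn_eq_of_isPreconnected_of_isClosed
    (convex_leftAnnihilatorSq ℝ A).isPreconnected (zero_mem_leftAnnihilatorSq A)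
    (leftAnnihilatorSq_subset_endomorphicLeft A) (isClosed_leftAnnihilatorSq A)
    isOpen_thickening (self_subset_thickening one_pos _)
    endomorphicLeft_inter_thickening_subset).symm

/-- In a complex (not necessarily unital) Banach algebra `A`, `N'₃(A)` is exactly
the connected component of `0` in the subspace `L(A)`. -/
theorem stmt_9 {A : Type*} [NonUnitalNormedRing A] [NormedSpace ℂ A]
    [IsScalarTower ℂ A A] [SMulCommClass ℂ A A] [CompleteSpace A] :
    {a : A | ∀ x y : A, a * x * y = 0} =
      connectedComponentIn {a : A | ∀ x y : A, a * x * a * y = a * x * y} 0 :=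
  stmt_9_general
end
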